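/- Let α ∈ (0,∞). Let F be a map assigning to every measure-preserving function f : (X,p) → (Y,q) between finite measure spaces a number F(f) ∈ [0,∞). Suppose F satisfies: (1) Functoriality: F(f ∘ g) = F(f) + F(g); (2) Additivity: F(f ⊕ g) = F(f) + F(g); (3) Homogeneity of degree α: F(λf) = λ^α F(f) for all λ ∈ [0,∞); (4) Continuity. Then there exists a constant c ≥ 0 such that F(f) = c(H_α(p) − H_α(q)) for every measure-preserving f : (X,p) → (Y,q), where H_α is the extended Tsallis entropy of order α. Conversely, for any constant c ≥ 0 this formula determines a map F obeying conditions (1)–(4). -/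

import Mathlib

/-!
Composing with the map to a one-point space, functoriality gives `F f = K p - K q` for
`K p := F (p → ‖p‖)`, and additivity splits `K (p ⊕ q) = K p + K q + κ ‖p‖ ‖q‖`, where `κ a b`
is the loss of collapsing two points of masses `a` and `b`. Comparing the two bracketings of a
three-point space shows that `κ` is a continuous 2-cocycle on `[0, ∞)`, homogeneous of degree `α`.
Integrating the cocycle identity writes `κ` as a coboundary `Φ (a + b) - Φ a - Φ b`; after
normalising `Φ 1 = 0`, homogeneity becomes `Φ (l t) = l ^ α Φ t + t Φ l`, whose continuous
solutions are the multiples of `t ↦ (t ^ α - t) / (α - 1)` (of `t log t` when `α = 1`). Since the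
extended Tsallis entropy is `φ ‖p‖ - ∑ φ (p i)` for this `φ`, induction on the number of points
gives `K = c • H_α`, and `c ≥ 0` because `κ 1 1 ≥ 0`. The same expression of `H_α` through the
superadditive `φ` yields the converse.
-/

open scoped BigOperators Classical
open Filter Topology Real

/-- `p` is a probability measure on the finite set `X`. -/
def IsProb {X : Type} [Fintype X] (p : X → ℝ) : Prop :=
  (∀ i, 0 ≤ p i) ∧ ∑ i, p i = 1

/-- `p` is a (nonnegative) measure on the finite set `X`. -/
def IsMeas {X : Type} [Fintype X] (p : X → ℝ) : Prop :=
  ∀ i, 0 ≤ p i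

/-- `f` is a measure-preserving function from `(X, p)` to `(Y, q)`. -/
def IsMP {X Y : Type} [Fintype X] [Fintype Y] (p : X → ℝ) (q : Y → ℝ) (f : X → Y) : Prop :=
  ∀ j : Y, q j = ∑ i, if f i = j then p i else 0

/-- Shannon entropy (with the convention `0 * log 0 = 0`, automatic since `Real.log 0 = 0`). -/
noncomputable def shannon {X : Type} [Fintype X] (p : X → ℝ) : ℝ :=
  -∑ i, p i * Real.log (p i)

/-- The convex combination `λ p ⊕ (1 - λ) q` on the disjoint union. -/
noncomputable def cvx (lam : ℝ) {X Y : Type} (p : X → ℝ) (q : Y → ℝ) : X ⊕ Y → ℝ :=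
  Sum.elim (fun i => lam * p i) (fun j => (1 - lam) * q j)

/-- The direct sum `p ⊕ q` on the disjoint union. -/
def dsum {X Y : Type} (p : X → ℝ) (q : Y → ℝ) : X ⊕ Y → ℝ :=
  Sum.elim p q

/-- Extended Shannon entropy of a measure on a finite set. -/
noncomputable def shannonExt {X : Type} [Fintype X] (p : X → ℝ) : ℝ :=
  if (∑ i, p i) = 0 then 0 else (∑ i, p i) * shannon (fun i => p i / ∑ j, p j)

/-- Tsallis entropy of order `α` of a probability measure. -/
noncomputable def tsallis (α : ℝ) {X : Type} [Fintype X] (p : X → ℝ) : ℝ :=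
  if α = 1 then shannon p else (1 / (α - 1)) * (1 - ∑ i, p i ^ α)

/-- Extended Tsallis entropy of order `α` of a measure on a finite set. -/
noncomputable def tsallisExt (α : ℝ) {X : Type} [Fintype X] (p : X → ℝ) : ℝ :=
  if (∑ i, p i) = 0 then 0 else (∑ i, p i) ^ α * tsallis α (fun i => p i / ∑ j, p j)

/-- The conditions of Corollary 7: nonnegativity, functoriality, additivity,
homogeneity of degree `α`, and continuity, for a map on measure-preserving
functions between finite measure spaces. -/
def TsallisConds (α : ℝ)
    (F : ∀ {X Y : Type} [Fintype X] [Fintype Y], (X → ℝ) → (Y → ℝ) → (X → Y) → ℝ) :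
    Prop :=
  (∀ {X Y : Type} [Fintype X] [Fintype Y] (p : X → ℝ) (q : Y → ℝ) (f : X → Y),
    IsMeas p → IsMeas q → IsMP p q f → 0 ≤ F p q f) ∧
  (∀ {X Y Z : Type} [Fintype X] [Fintype Y] [Fintype Z]
    (p : X → ℝ) (q : Y → ℝ) (r : Z → ℝ) (g : X → Y) (f : Y → Z),
    IsMeas p → IsMeas q → IsMeas r → IsMP p q g → IsMP q r f →
    F p r (f ∘ g) = F q r f + F p q g) ∧
  (∀ {X X' Y Y' : Type} [Fintype X] [Fintype X'] [Fintype Y] [Fintype Y']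
    (p : X → ℝ) (p' : X' → ℝ) (q : Y → ℝ) (q' : Y' → ℝ) (f : X → X') (g : Y → Y'),
    IsMeas p → IsMeas p' → IsMeas q → IsMeas q' → IsMP p p' f → IsMP q q' g →
    F (dsum p q) (dsum p' q') (Sum.map f g) = F p p' f + F q q' g) ∧
  (∀ {X Y : Type} [Fintype X] [Fintype Y] (p : X → ℝ) (q : Y → ℝ) (f : X → Y)
    (lam : ℝ), 0 ≤ lam → IsMeas p → IsMeas q → IsMP p q f →
    F (fun i => lam * p i) (fun j => lam * q j) f = lam ^ α * F p q f) ∧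
  (∀ {X Y : Type} [Fintype X] [Fintype Y]
    (pn : ℕ → X → ℝ) (qn : ℕ → Y → ℝ) (fn : ℕ → X → Y)
    (p : X → ℝ) (q : Y → ℝ) (f : X → Y),
    (∀ n, IsMeas (pn n)) → (∀ n, IsMeas (qn n)) → (∀ n, IsMP (pn n) (qn n) (fn n)) →
    IsMeas p → IsMeas q → IsMP p q f →
    (∀ᶠ n in atTop, fn n = f) →
    (∀ i, Tendsto (fun n => pn n i) atTop (𝓝 (p i))) →
    (∀ j, Tendsto (fun n => qn n j) atTop (𝓝 (q j))) →
    Tendsto (fun n => F (pn n) (qn n) (fn n)) atTop (𝓝 (F p q f)))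

-- The linear term cancels in `tsallisExt_eq_sub_sum`; it makes `tsallisFun_mul` hold
-- uniformly in `α`, with `t * log t` as the limit at `α = 1`.
noncomputable def tsallisFun (α t : ℝ) : ℝ :=
  if α = 1 then t * log t else (t ^ α - t) / (α - 1)

section TsallisFun

variable {α : ℝ}

lemma tsallisFun_zero (hα : α ≠ 0) : tsallisFun α 0 = 0 := by
  unfold tsallisFun; split_ifs <;> simp [Real.zero_rpow hα]

lemma tsallisFun_one : tsallisFun α 1 = 0 := by
  unfold tsallisFun; split_ifs <;> simp

lemma continuous_tsallisFun (hα : 0 < α) : Continuous (tsallisFun α) := by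
  unfold tsallisFun
  split_ifs
  · exact Real.continuous_mul_log
  · exact ((Real.continuous_rpow_const hα.le).sub continuous_id).div_const _

lemma tsallisFun_mul {l t : ℝ} (hl : 0 ≤ l) (ht : 0 ≤ t) :
    tsallisFun α (l * t) = l ^ α * tsallisFun α t + t * tsallisFun α l := by
  unfold tsallisFun
  split_ifs with h
  · subst h
    rcases hl.eq_or_lt with rfl | hl
    · simp
    rcases ht.eq_or_lt with rfl | ht
    · simp
    rw [Real.log_mul hl.ne' ht.ne', Real.rpow_one]
    ring
  · rw [Real.mul_rpow hl ht]
    ring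

lemma tsallisFun_two_pos : 0 < tsallisFun α 2 := by
  unfold tsallisFun
  split_ifs with h
  · exact mul_pos two_pos (Real.log_pos one_lt_two)
  rcases lt_or_gt_of_ne h with h | h
  · refine div_pos_of_neg_of_neg ?_ (by linarith)
    simpa using Real.rpow_lt_rpow_of_exponent_lt one_lt_two h
  · refine div_pos ?_ (by linarith)
    simpa using Real.rpow_lt_rpow_of_exponent_lt one_lt_two h

lemma tsallisFun_add_le (hα : 0 < α) {a b : ℝ} (ha : 0 ≤ a) (hb : 0 ≤ b) :
    tsallisFun α a + tsallisFun α b ≤ tsallisFun α (a + b) := by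
  unfold tsallisFun
  split_ifs with h
  · rcases ha.eq_or_lt with rfl | ha'
    · simp
    rcases hb.eq_or_lt with rfl | hb'
    · simp
    have := Real.log_le_log ha' (le_add_of_nonneg_right hb)
    have := Real.log_le_log hb' (le_add_of_nonneg_left ha)
    nlinarith
  rcases lt_or_gt_of_ne h with h | h
  · have := Real.rpow_add_le_add_rpow ha hb hα.le h.le
    rw [← add_div, div_le_div_right_of_neg (by linarith)]
    linarith
  · have := Real.add_rpow_le_rpow_add ha hb h.le
    rw [← add_div, div_le_div_iff_of_pos_right (by linarith)]
    linarith

lemma sum_tsallisFun_le (hα : 0 < α) {ι : Type} (s : Finset ι) {g : ι → ℝ}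
    (hg : ∀ i ∈ s, 0 ≤ g i) :
    ∑ i ∈ s, tsallisFun α (g i) ≤ tsallisFun α (∑ i ∈ s, g i) := by
  have := Finset.le_sum_of_subadditive_on_pred (fun t => -tsallisFun α t) (0 ≤ ·)
    (by simp [tsallisFun_zero hα.ne'])
    (fun x y hx hy => by linarith [tsallisFun_add_le hα hx hy]) (fun _ _ => add_nonneg) g hg
  simpa [Finset.sum_neg_distrib] using this

end TsallisFun

section Measures

variable {X Y X' Y' : Type} [Fintype X] [Fintype Y] [Fintype X'] [Fintype Y']

lemma IsMP.sum_eq {p : X → ℝ} {q : Y → ℝ} {f : X → Y} (h : IsMP p q f) :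
    ∑ j, q j = ∑ i, p i := by
  rw [Finset.sum_congr rfl fun j _ => h j, Finset.sum_comm]
  simp

lemma IsMeas.sum_nonneg {p : X → ℝ} (hp : IsMeas p) : 0 ≤ ∑ i, p i :=
  Finset.sum_nonneg fun i _ => hp i

lemma isMeas_const {x : ℝ} (hx : 0 ≤ x) : IsMeas fun _ : PUnit => x := fun _ => hx

lemma IsMeas.dsum {p : X → ℝ} {q : Y → ℝ} (hp : IsMeas p) (hq : IsMeas q) :
    IsMeas (dsum p q) := by
  rintro (x | y)
  exacts [hp x, hq y]

lemma IsMeas.smul {p : X → ℝ} (hp : IsMeas p) {l : ℝ} (hl : 0 ≤ l) :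
    IsMeas (fun i => l * p i) :=
  fun i => mul_nonneg hl (hp i)

lemma sum_dsum (p : X → ℝ) (q : Y → ℝ) : ∑ i, dsum p q i = ∑ x, p x + ∑ y, q y :=
  Fintype.sum_sum_type _

lemma isMP_id (p : X → ℝ) : IsMP p p id := by
  intro j
  simp

lemma isMP_toPUnit (p : X → ℝ) :
    IsMP p (fun _ : PUnit => ∑ i, p i) (fun _ => PUnit.unit) := by
  intro j
  simp

lemma isMP_equiv (e : X ≃ Y) (p : X → ℝ) : IsMP p (fun j => p (e.symm j)) e := by
  intro j
  simp [← Equiv.eq_symm_apply]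

lemma IsMP.sumMap {p : X → ℝ} {p' : X' → ℝ} {q : Y → ℝ} {q' : Y' → ℝ} {f : X → X'}
    {g : Y → Y'} (hf : IsMP p p' f) (hg : IsMP q q' g) :
    IsMP (dsum p q) (dsum p' q') (Sum.map f g) := by
  rintro (x' | y')
  · simp [dsum, Fintype.sum_sum_type, hf x']
  · simp [dsum, Fintype.sum_sum_type, hg y']

end Measures

section TsallisExt

variable {α : ℝ} {X Y : Type} [Fintype X] [Fintype Y]

lemma tsallis_eq_neg_sum_tsallisFun {p : X → ℝ} (hp : ∑ i, p i = 1) :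
    tsallis α p = -∑ i, tsallisFun α (p i) := by
  unfold tsallis tsallisFun shannon
  split_ifs with h
  · rfl
  · rw [← Finset.sum_div, Finset.sum_sub_distrib, hp]
    ring

lemma tsallisExt_eq_sub_sum (hα : α ≠ 0) {p : X → ℝ} (hp : IsMeas p) :
    tsallisExt α p = tsallisFun α (∑ i, p i) - ∑ i, tsallisFun α (p i) := by
  rcases hp.sum_nonneg.eq_or_lt with hs | hs
  · have hp0 : ∀ i, p i = 0 := fun i =>
      (Finset.sum_eq_zero_iff_of_nonneg fun i _ => hp i).1 hs.symm i (Finset.mem_univ i)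
    simp [tsallisExt, hp0, tsallisFun_zero hα]
  set s := ∑ i, p i
  have hsplit : ∀ i, tsallisFun α (p i)
      = s ^ α * tsallisFun α (p i / s) + p i / s * tsallisFun α s := fun i => by
    rw [← tsallisFun_mul hs.le (div_nonneg (hp i) hs.le), mul_div_cancel₀ _ hs.ne']
  have hnorm : ∑ i, p i / s = 1 := by rw [← Finset.sum_div, div_self hs.ne']
  rw [tsallisExt, if_neg hs.ne', tsallis_eq_neg_sum_tsallisFun hnorm, Finset.sum_congr rfl
    fun i _ => hsplit i, Finset.sum_add_distrib, ← Finset.mul_sum, ← Finset.sum_mul, hnorm]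
  ring

lemma tsallisExt_le_of_isMP (hα : 0 < α) {p : X → ℝ} {q : Y → ℝ} {f : X → Y}
    (hp : IsMeas p) (hq : IsMeas q) (hf : IsMP p q f) : tsallisExt α q ≤ tsallisExt α p := by
  rw [tsallisExt_eq_sub_sum hα.ne' hp, tsallisExt_eq_sub_sum hα.ne' hq, hf.sum_eq,
    sub_le_sub_iff_left, ← Finset.sum_fiberwise Finset.univ f]
  refine Finset.sum_le_sum fun j _ => ?_
  rw [hf j, ← Finset.sum_filter]
  exact sum_tsallisFun_le hα _ fun i _ => hp i

lemma tsallisExt_smul (hα : α ≠ 0) {p : X → ℝ} (hp : IsMeas p) {l : ℝ} (hl : 0 ≤ l) :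
    tsallisExt α (fun i => l * p i) = l ^ α * tsallisExt α p := by
  rw [tsallisExt_eq_sub_sum hα (hp.smul hl), tsallisExt_eq_sub_sum hα hp, ← Finset.mul_sum,
    tsallisFun_mul hl hp.sum_nonneg, Finset.sum_congr rfl fun i _ => tsallisFun_mul hl (hp i),
    Finset.sum_add_distrib, ← Finset.mul_sum, ← Finset.sum_mul]
  ring

lemma tsallisExt_dsum (hα : α ≠ 0) {p : X → ℝ} {q : Y → ℝ} (hp : IsMeas p) (hq : IsMeas q) :
    tsallisExt α (dsum p q) = tsallisExt α p + tsallisExt α q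
      + (tsallisFun α (∑ i, p i + ∑ j, q j) - tsallisFun α (∑ i, p i)
        - tsallisFun α (∑ j, q j)) := by
  rw [tsallisExt_eq_sub_sum hα (hp.dsum hq), tsallisExt_eq_sub_sum hα hp,
    tsallisExt_eq_sub_sum hα hq, sum_dsum]
  simp only [Fintype.sum_sum_type, dsum, Sum.elim_inl, Sum.elim_inr]
  ring

lemma tsallisExt_comp_equiv (hα : α ≠ 0) (e : X ≃ Y) {p : X → ℝ} (hp : IsMeas p) :
    tsallisExt α (fun j => p (e.symm j)) = tsallisExt α p := by
  rw [tsallisExt_eq_sub_sum hα (fun j => hp _), tsallisExt_eq_sub_sum hα hp,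
    Equiv.sum_comp e.symm p, Equiv.sum_comp e.symm fun i => tsallisFun α (p i)]

lemma tendsto_tsallisExt (hα : 0 < α) {pn : ℕ → X → ℝ} {p : X → ℝ} (hpn : ∀ n, IsMeas (pn n))
    (hp : IsMeas p) (h : ∀ i, Tendsto (fun n => pn n i) atTop (𝓝 (p i))) :
    Tendsto (fun n => tsallisExt α (pn n)) atTop (𝓝 (tsallisExt α p)) := by
  simp only [tsallisExt_eq_sub_sum hα.ne' (hpn _), tsallisExt_eq_sub_sum hα.ne' hp]
  have hc := continuous_tsallisFun hα
  exact ((hc.tendsto _).comp (tendsto_finsetSum _ fun i _ => h i)).sub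
    (tendsto_finsetSum _ fun i _ => (hc.tendsto _).comp (h i))

end TsallisExt

theorem tsallisConds_tsallisExt {α : ℝ} (hα : 0 < α) {c : ℝ} (hc : 0 ≤ c) :
    TsallisConds α (fun {X Y : Type} [Fintype X] [Fintype Y]
      (p : X → ℝ) (q : Y → ℝ) (_ : X → Y) => c * (tsallisExt α p - tsallisExt α q)) := by
  refine ⟨?_, ?_, ?_, ?_, ?_⟩
  · intro X Y _ _ p q f hp hq hf
    exact mul_nonneg hc (sub_nonneg.2 (tsallisExt_le_of_isMP hα hp hq hf))
  · intros
    ring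
  · intro X X' Y Y' _ _ _ _ p p' q q' f g hp hp' hq hq' hf hg
    dsimp only
    rw [tsallisExt_dsum hα.ne' hp hq, tsallisExt_dsum hα.ne' hp' hq', hf.sum_eq, hg.sum_eq]
    ring
  · intro X Y _ _ p q f l hl hp hq _
    dsimp only
    rw [tsallisExt_smul hα.ne' hp hl, tsallisExt_smul hα.ne' hq hl]
    ring
  · intro X Y _ _ pn qn fn p q f hpn hqn _ hp hq _ _ hpt hqt
    exact ((tendsto_tsallisExt hα hpn hp hpt).sub (tendsto_tsallisExt hα hqn hq hqt)).const_mul c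

section FunctionalEquations

lemma eq_mul_of_additive {f : ℝ → ℝ} (hf : Continuous f) (hadd : ∀ x y, f (x + y) = f x + f y)
    (t : ℝ) : f t = t * f 1 := by
  simpa using map_real_smul (AddMonoidHom.mk' f hadd) hf t 1

lemma eq_mul_of_additive_on_nonneg {f : ℝ → ℝ} (hf : Continuous f)
    (hadd : ∀ x y, 0 ≤ x → 0 ≤ y → f (x + y) = f x + f y) {t : ℝ} (ht : 0 ≤ t) :
    f t = t * f 1 := by
  have hadd₃ : ∀ x y z, 0 ≤ x → 0 ≤ y → 0 ≤ z → f (x + y + z) = f x + f y + f z :=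
    fun x y z hx hy hz => by rw [hadd _ _ (add_nonneg hx hy) hz, hadd x y hx hy]
  have hf0 : f 0 = 0 := by simpa using hadd 0 0 le_rfl le_rfl
  -- the odd extension `x ↦ f x⁺ - f x⁻` is additive on all of `ℝ`
  let g : ℝ → ℝ := fun x => f (max x 0) - f (max (-x) 0)
  have hg : ∀ x y, g (x + y) = g x + g y := fun x y => by
    have hsplit : max (x + y) 0 + max (-x) 0 + max (-y) 0
        = max (-(x + y)) 0 + max x 0 + max y 0 := by
      linarith [max_zero_sub_max_neg_zero_eq_self x, max_zero_sub_max_neg_zero_eq_self y,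
        max_zero_sub_max_neg_zero_eq_self (x + y)]
    have := congrArg f hsplit
    simp only [hadd₃ _ _ _ (le_max_right _ _) (le_max_right _ _) (le_max_right _ _)] at this
    simp only [g]
    linarith
  have hgc : Continuous g := (hf.comp (continuous_id.max continuous_const)).sub
    (hf.comp (continuous_neg.max continuous_const))
  have := eq_mul_of_additive hgc hg t
  simp only [g, max_eq_left ht, max_eq_left zero_le_one, max_eq_right (neg_nonpos.2 ht),
    max_eq_right (neg_nonpos.2 zero_le_one), hf0, sub_zero] at this
  exact this

lemma exists_coboundary_of_cocycle {k : ℝ → ℝ → ℝ} (hk : Continuous fun u : ℝ × ℝ => k u.1 u.2)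
    (hcoc : ∀ a b c, 0 ≤ a → 0 ≤ b → 0 ≤ c → k a b + k (a + b) c = k b c + k a (b + c)) :
    ∃ Φ : ℝ → ℝ, Continuous Φ ∧ ∀ a b, 0 ≤ a → 0 ≤ b → k a b = Φ (a + b) - Φ a - Φ b := by
  have hk₁ : ∀ x, Continuous (k x) := fun x => hk.comp (continuous_const.prodMk continuous_id)
  have hk₂ : ∀ y, Continuous (k · y) := fun y => hk.comp (continuous_id.prodMk continuous_const)
  let G : ℝ → ℝ := fun x => ∫ s in (0 : ℝ)..1, k x s
  let Ψ : ℝ → ℝ := fun x => ∫ u in (0 : ℝ)..x, k u 1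
  refine ⟨fun x => Ψ x - G x, ?_, fun a b ha hb => ?_⟩
  · exact (intervalIntegral.continuous_primitive (fun _ _ => (hk₂ 1).intervalIntegrable _ _) 0).sub
      (intervalIntegral.continuous_parametric_intervalIntegral_of_continuous' hk 0 1)
  -- integrate the cocycle identity over `c ∈ [0, 1]`
  have hc : k a b + G (a + b) = G b + ∫ s in (0 : ℝ)..1, k a (b + s) := by
    have hkb : Continuous fun s => k a (b + s) := (hk₁ a).comp (continuous_const_add b)
    have := intervalIntegral.integral_congr (μ := MeasureTheory.volume) (a := 0) (b := 1)
      (f := fun s => k a b + k (a + b) s) (g := fun s => k b s + k a (b + s)) fun s hs => by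
        rw [Set.uIcc_of_le zero_le_one] at hs
        exact hcoc a b s ha hb hs.1
    rwa [intervalIntegral.integral_add intervalIntegrable_const
      ((hk₁ _).intervalIntegrable _ _), intervalIntegral.integral_add
      ((hk₁ _).intervalIntegrable _ _) (hkb.intervalIntegrable _ _),
      intervalIntegral.integral_const, sub_zero, one_smul] at this
  have hshift : ∫ s in (0 : ℝ)..1, k a (b + s)
      = G a + ∫ u in (0 : ℝ)..b, (k a (u + 1) - k a u) := by
    have hi : ∀ x y : ℝ, IntervalIntegrable (k a) MeasureTheory.volume x y :=
      fun _ _ => (hk₁ a).intervalIntegrable _ _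
    have hka : Continuous fun u => k a (u + 1) := (hk₁ a).comp (continuous_add_const 1)
    rw [intervalIntegral.integral_comp_add_left (k a), intervalIntegral.integral_sub
      (hka.intervalIntegrable _ _) (hi _ _),
      intervalIntegral.integral_comp_add_right (k a), add_zero, zero_add,
      ← intervalIntegral.integral_interval_sub_left (hi 0 (b + 1)) (hi 0 b),
      ← intervalIntegral.integral_interval_sub_left (hi 0 (b + 1)) (hi 0 1)]
    ring
  -- the cocycle identity with `c = 1` turns the integrand into `k (a + u) 1 - k u 1`
  have hdiff : ∫ u in (0 : ℝ)..b, (k a (u + 1) - k a u) = Ψ (a + b) - Ψ a - Ψ b := by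
    have hi : ∀ x y : ℝ, IntervalIntegrable (k · 1) MeasureTheory.volume x y :=
      fun _ _ => (hk₂ 1).intervalIntegrable _ _
    have hka : Continuous fun u => k (a + u) 1 := (hk₂ 1).comp (continuous_const_add a)
    rw [intervalIntegral.integral_congr (g := fun u => k (a + u) 1 - k u 1) fun u hu => by
        rw [Set.uIcc_of_le hb] at hu
        linarith [hcoc a u 1 ha hu.1 zero_le_one],
      intervalIntegral.integral_sub (hka.intervalIntegrable _ _)
        (hi _ _), intervalIntegral.integral_comp_add_left (k · 1), add_zero,
      ← intervalIntegral.integral_interval_sub_left (hi 0 (a + b)) (hi 0 a)]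
  linarith

lemma exists_eq_mul_tsallisFun_of_map_mul {α : ℝ} {Φ : ℝ → ℝ} (hΦ : Continuous Φ)
    (hmul : ∀ l t, 0 ≤ l → 0 ≤ t → Φ (l * t) = l ^ α * Φ t + t * Φ l) :
    ∃ c, ∀ t, 0 ≤ t → Φ t = c * tsallisFun α t := by
  by_cases hα : α = 1
  · subst hα
    -- `Φ (e ^ s) / e ^ s` is additive in `s`
    let D : ℝ → ℝ := fun s => Φ (exp s) / exp s
    have hD : ∀ s t, D (s + t) = D s + D t := fun s t => by
      simp only [D, Real.exp_add, hmul _ _ (exp_pos s).le (exp_pos t).le, Real.rpow_one]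
      field_simp
      ring
    have hDc : Continuous D :=
      (hΦ.comp continuous_exp).div continuous_exp fun s => (exp_pos s).ne'
    refine ⟨D 1, fun t ht => ?_⟩
    rcases ht.eq_or_lt with rfl | ht
    · simpa [tsallisFun] using hmul 0 0 le_rfl le_rfl
    have := eq_mul_of_additive hDc hD (log t)
    simp only [D, exp_log ht] at this ⊢
    rw [tsallisFun, if_pos rfl]
    field_simp at this ⊢
    linarith
  · have h2 := tsallisFun_two_pos (α := α)
    refine ⟨Φ 2 / tsallisFun α 2, fun t ht => ?_⟩
    have hswap := (hmul t 2 ht zero_le_two).symm.trans (mul_comm t 2 ▸ hmul 2 t zero_le_two ht)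
    simp only [tsallisFun, if_neg hα] at h2 ⊢
    have hne : α - 1 ≠ 0 := sub_ne_zero.2 hα
    have hne2 : (2 : ℝ) ^ α - 2 ≠ 0 := fun h => by simp [h] at h2
    field_simp
    linear_combination -hswap

lemma exists_eq_mul_tsallisFun_of_cocycle {α : ℝ} {k : ℝ → ℝ → ℝ}
    (hk : Continuous fun u : ℝ × ℝ => k u.1 u.2)
    (hcoc : ∀ a b c, 0 ≤ a → 0 ≤ b → 0 ≤ c → k a b + k (a + b) c = k b c + k a (b + c))
    (hhom : ∀ l a b, 0 ≤ l → 0 ≤ a → 0 ≤ b → k (l * a) (l * b) = l ^ α * k a b) :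
    ∃ c, ∀ a b, 0 ≤ a → 0 ≤ b →
      k a b = c * (tsallisFun α (a + b) - tsallisFun α a - tsallisFun α b) := by
  obtain ⟨Φ, hΦc, hΦ⟩ := exists_coboundary_of_cocycle hk hcoc
  -- subtracting a linear function does not change the coboundary
  let Φ₀ : ℝ → ℝ := fun t => Φ t - t * Φ 1
  have hΦ₀ : ∀ a b, 0 ≤ a → 0 ≤ b → k a b = Φ₀ (a + b) - Φ₀ a - Φ₀ b := fun a b ha hb => by
    simp only [Φ₀, hΦ a b ha hb]
    ring
  have hΦ₀c : Continuous Φ₀ := hΦc.sub (continuous_id.mul continuous_const)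
  have hmul : ∀ l t, 0 ≤ l → 0 ≤ t → Φ₀ (l * t) = l ^ α * Φ₀ t + t * Φ₀ l := fun l t hl ht => by
    have hadd : ∀ x y, 0 ≤ x → 0 ≤ y → Φ₀ (l * (x + y)) - l ^ α * Φ₀ (x + y)
        = (Φ₀ (l * x) - l ^ α * Φ₀ x) + (Φ₀ (l * y) - l ^ α * Φ₀ y) := fun x y hx hy => by
      have h₁ := hΦ₀ (l * x) (l * y) (mul_nonneg hl hx) (mul_nonneg hl hy)
      rw [← mul_add] at h₁
      linear_combination -h₁ + l ^ α * hΦ₀ x y hx hy + hhom l x y hl hx hy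
    have := eq_mul_of_additive_on_nonneg (f := fun t => Φ₀ (l * t) - l ^ α * Φ₀ t)
      ((hΦ₀c.comp (continuous_const_mul l)).sub (continuous_const.mul hΦ₀c)) hadd ht
    simp only [Φ₀, mul_one] at this ⊢
    linarith
  obtain ⟨c, hc⟩ := exists_eq_mul_tsallisFun_of_map_mul hΦ₀c hmul
  refine ⟨c, fun a b ha hb => ?_⟩
  rw [hΦ₀ a b ha hb, hc _ (add_nonneg ha hb), hc a ha, hc b hb]
  ring

end FunctionalEquations

def lossToPoint (F : ∀ {X Y : Type} [Fintype X] [Fintype Y], (X → ℝ) → (Y → ℝ) → (X → Y) → ℝ)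
    {X : Type} [Fintype X] (p : X → ℝ) : ℝ :=
  F p (fun _ : PUnit => ∑ i, p i) (fun _ => PUnit.unit)

def twoPointLoss (F : ∀ {X Y : Type} [Fintype X] [Fintype Y], (X → ℝ) → (Y → ℝ) → (X → Y) → ℝ)
    (a b : ℝ) : ℝ :=
  lossToPoint F (dsum (fun _ : PUnit => a) (fun _ : PUnit => b))

section LossToPoint

variable {α : ℝ} {F : ∀ {X Y : Type} [Fintype X] [Fintype Y], (X → ℝ) → (Y → ℝ) → (X → Y) → ℝ}
  {X Y : Type} [Fintype X] [Fintype Y]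

lemma TsallisConds.apply_id (hF : TsallisConds α F) {p : X → ℝ} (hp : IsMeas p) :
    F p p id = 0 := by
  have := hF.2.1 p p p id id hp hp hp (isMP_id p) (isMP_id p)
  rw [Function.id_comp] at this
  linarith

lemma TsallisConds.apply_eq_lossToPoint_sub (hF : TsallisConds α F) {p : X → ℝ} {q : Y → ℝ}
    {f : X → Y} (hp : IsMeas p) (hq : IsMeas q) (hf : IsMP p q f) :
    F p q f = lossToPoint F p - lossToPoint F q := by
  have := hF.2.1 p q _ f _ hp hq (fun _ => hq.sum_nonneg) hf (isMP_toPUnit q)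
  rw [lossToPoint, lossToPoint, ← hf.sum_eq]
  exact eq_sub_of_add_eq' this.symm

lemma TsallisConds.lossToPoint_nonneg (hF : TsallisConds α F) {p : X → ℝ} (hp : IsMeas p) :
    0 ≤ lossToPoint F p :=
  hF.1 _ _ _ hp (fun _ => hp.sum_nonneg) (isMP_toPUnit p)

lemma TsallisConds.lossToPoint_comp_equiv (hF : TsallisConds α F) (e : X ≃ Y) {p : X → ℝ}
    (hp : IsMeas p) : lossToPoint F (fun j => p (e.symm j)) = lossToPoint F p := by
  have hq : IsMeas fun j => p (e.symm j) := fun j => hp _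
  have he : IsMP p _ e := isMP_equiv e p
  have he' : IsMP (fun j => p (e.symm j)) p e.symm := by
    simpa using isMP_equiv e.symm fun j => p (e.symm j)
  have h₁ : 0 ≤ F _ _ e := hF.1 _ _ _ hp hq he
  have h₂ : 0 ≤ F _ _ e.symm := hF.1 _ _ _ hq hp he'
  rw [hF.apply_eq_lossToPoint_sub hp hq he] at h₁
  rw [hF.apply_eq_lossToPoint_sub hq hp he'] at h₂
  linarith

lemma TsallisConds.lossToPoint_punit (hF : TsallisConds α F) {p : PUnit → ℝ} (hp : IsMeas p) :
    lossToPoint F p = 0 := by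
  have : (fun _ : PUnit => ∑ i, p i) = p := funext fun _ => Fintype.sum_unique p
  rw [lossToPoint, this]
  exact hF.apply_id hp

lemma TsallisConds.lossToPoint_smul (hF : TsallisConds α F) {p : X → ℝ} (hp : IsMeas p)
    {l : ℝ} (hl : 0 ≤ l) : lossToPoint F (fun i => l * p i) = l ^ α * lossToPoint F p := by
  rw [lossToPoint, ← Finset.mul_sum]
  exact hF.2.2.2.1 p _ _ l hl hp (fun _ => hp.sum_nonneg) (isMP_toPUnit p)

lemma TsallisConds.lossToPoint_dsum (hF : TsallisConds α F) {p : X → ℝ} {q : Y → ℝ}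
    (hp : IsMeas p) (hq : IsMeas q) :
    lossToPoint F (dsum p q)
      = lossToPoint F p + lossToPoint F q + twoPointLoss F (∑ i, p i) (∑ j, q j) := by
  have hpq := (isMP_toPUnit p).sumMap (isMP_toPUnit q)
  have hsums : IsMeas (dsum (fun _ : PUnit => ∑ i, p i) (fun _ : PUnit => ∑ j, q j)) :=
    IsMeas.dsum (fun _ => hp.sum_nonneg) (fun _ => hq.sum_nonneg)
  have hsplit : F _ _ (Sum.map _ _) = lossToPoint F p + lossToPoint F q :=
    hF.2.2.1 p _ q _ _ _ hp (fun _ => hp.sum_nonneg) hq (fun _ => hq.sum_nonneg)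
      (isMP_toPUnit p) (isMP_toPUnit q)
  rw [hF.apply_eq_lossToPoint_sub (hp.dsum hq) hsums hpq] at hsplit
  rw [twoPointLoss]
  linarith

lemma TsallisConds.tendsto_lossToPoint (hF : TsallisConds α F) {pn : ℕ → X → ℝ} {p : X → ℝ}
    (hpn : ∀ n, IsMeas (pn n)) (hp : IsMeas p)
    (h : ∀ i, Tendsto (fun n => pn n i) atTop (𝓝 (p i))) :
    Tendsto (fun n => lossToPoint F (pn n)) atTop (𝓝 (lossToPoint F p)) :=
  hF.2.2.2.2 pn _ _ p _ _ hpn (fun n _ => (hpn n).sum_nonneg) (fun n => isMP_toPUnit (pn n))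
    hp (fun _ => hp.sum_nonneg) (isMP_toPUnit p) (Eventually.of_forall fun _ => rfl) h
    fun _ => tendsto_finsetSum _ fun i _ => h i

end LossToPoint

section TwoPointLoss

variable {α : ℝ} {F : ∀ {X Y : Type} [Fintype X] [Fintype Y], (X → ℝ) → (Y → ℝ) → (X → Y) → ℝ}

lemma TsallisConds.twoPointLoss_cocycle (hF : TsallisConds α F) {a b c : ℝ} (ha : 0 ≤ a)
    (hb : 0 ≤ b) (hc : 0 ≤ c) :
    twoPointLoss F a b + twoPointLoss F (a + b) c
      = twoPointLoss F b c + twoPointLoss F a (b + c) := by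
  have hassoc := hF.lossToPoint_comp_equiv (Equiv.sumAssoc PUnit PUnit PUnit)
    (((isMeas_const ha).dsum (isMeas_const hb)).dsum (isMeas_const hc))
  have hright : (fun j => dsum (dsum (fun _ : PUnit => a) fun _ : PUnit => b) (fun _ : PUnit => c)
      ((Equiv.sumAssoc PUnit PUnit PUnit).symm j))
      = dsum (fun _ : PUnit => a) (dsum (fun _ : PUnit => b) fun _ : PUnit => c) := by
    funext j
    rcases j with _ | _ | _ <;> rfl
  rw [hright, hF.lossToPoint_dsum (isMeas_const ha) ((isMeas_const hb).dsum (isMeas_const hc)),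
    hF.lossToPoint_dsum ((isMeas_const ha).dsum (isMeas_const hb)) (isMeas_const hc),
    hF.lossToPoint_dsum (isMeas_const hb) (isMeas_const hc),
    hF.lossToPoint_dsum (isMeas_const ha) (isMeas_const hb)] at hassoc
  simp only [hF.lossToPoint_punit (isMeas_const ha), hF.lossToPoint_punit (isMeas_const hb),
    hF.lossToPoint_punit (isMeas_const hc), sum_dsum, Fintype.sum_unique] at hassoc
  linarith

lemma TsallisConds.twoPointLoss_smul (hF : TsallisConds α F) {l a b : ℝ} (hl : 0 ≤ l)
    (ha : 0 ≤ a) (hb : 0 ≤ b) : twoPointLoss F (l * a) (l * b) = l ^ α * twoPointLoss F a b := by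
  rw [twoPointLoss, twoPointLoss,
    ← hF.lossToPoint_smul ((isMeas_const ha).dsum (isMeas_const hb)) hl]
  congr 1
  funext i
  cases i <;> rfl

lemma TsallisConds.continuous_twoPointLoss (hF : TsallisConds α F) :
    Continuous fun u : ℝ × ℝ => twoPointLoss F (max u.1 0) (max u.2 0) := by
  refine continuous_iff_seqContinuous.2 fun x u hx => ?_
  refine hF.tendsto_lossToPoint
    (fun n => (isMeas_const (le_max_right _ _)).dsum (isMeas_const (le_max_right _ _)))
    ((isMeas_const (le_max_right _ _)).dsum (isMeas_const (le_max_right _ _))) ?_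
  rintro (_ | _)
  · exact ((continuous_fst.max continuous_const).tendsto u).comp hx
  · exact ((continuous_snd.max continuous_const).tendsto u).comp hx

lemma TsallisConds.lossToPoint_eq_mul_tsallisExt (hF : TsallisConds α F) (hα : α ≠ 0) {c : ℝ}
    (hc : ∀ a b, 0 ≤ a → 0 ≤ b →
      twoPointLoss F a b = c * (tsallisFun α (a + b) - tsallisFun α a - tsallisFun α b))
    {X : Type} [Fintype X] {p : X → ℝ} (hp : IsMeas p) :
    lossToPoint F p = c * tsallisExt α p := by
  refine Fintype.induction_empty_option
    (P := fun X _ => ∀ p : X → ℝ, IsMeas p → lossToPoint F p = c * tsallisExt α p)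
    (fun X Y _ e ih p hp => ?_) (fun p hp => ?_) (fun X _ ih p hp => ?_) X p hp
  · let := Fintype.ofEquiv Y e.symm
    have := ih (fun i => p (e i)) fun _ => hp _
    rw [← hF.lossToPoint_comp_equiv e (p := fun i => p (e i)) fun _ => hp _,
      ← tsallisExt_comp_equiv hα e (p := fun i => p (e i)) fun _ => hp _] at this
    simpa only [Equiv.apply_symm_apply] using this
  · have hp0 : p = fun i => 0 * p i := funext fun i => i.elim
    rw [hp0, hF.lossToPoint_smul hp le_rfl, tsallisExt_smul hα hp le_rfl,
      Real.zero_rpow hα, zero_mul, zero_mul, mul_zero]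
  · let e := (Equiv.optionEquivSumPUnit X).symm
    have hq : p = fun j => dsum (fun i => p (some i)) (fun _ : PUnit => p none) (e.symm j) := by
      funext j
      cases j <;> rfl
    have hp₁ : IsMeas fun i => p (some i) := fun _ => hp _
    have hp₂ : IsMeas fun _ : PUnit => p none := fun _ => hp _
    rw [hq, hF.lossToPoint_comp_equiv e (hp₁.dsum hp₂),
      tsallisExt_comp_equiv hα e (hp₁.dsum hp₂), hF.lossToPoint_dsum hp₁ hp₂,
      tsallisExt_dsum hα hp₁ hp₂, ih _ hp₁, hF.lossToPoint_punit hp₂,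
      hc _ _ hp₁.sum_nonneg hp₂.sum_nonneg, tsallisExt_eq_sub_sum hα hp₂]
    simp only [Fintype.sum_unique]
    ring

lemma TsallisConds.exists_twoPointLoss_eq (hF : TsallisConds α F) :
    ∃ c, 0 ≤ c ∧ ∀ a b, 0 ≤ a → 0 ≤ b →
      twoPointLoss F a b = c * (tsallisFun α (a + b) - tsallisFun α a - tsallisFun α b) := by
  -- clamping extends `twoPointLoss F` continuously from `[0, ∞)²` to `ℝ²`
  let k : ℝ → ℝ → ℝ := fun a b => twoPointLoss F (max a 0) (max b 0)
  have hk : ∀ a b, 0 ≤ a → 0 ≤ b → k a b = twoPointLoss F a b := fun a b ha hb => by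
    simp only [k, max_eq_left ha, max_eq_left hb]
  obtain ⟨c, hc⟩ := exists_eq_mul_tsallisFun_of_cocycle (α := α) (k := k)
    hF.continuous_twoPointLoss
    (fun a b c ha hb hc => by
      rw [hk a b ha hb, hk _ c (add_nonneg ha hb) hc, hk b c hb hc, hk a _ ha (add_nonneg hb hc)]
      exact hF.twoPointLoss_cocycle ha hb hc)
    (fun l a b hl ha hb => by
      rw [hk _ _ (mul_nonneg hl ha) (mul_nonneg hl hb), hk a b ha hb]
      exact hF.twoPointLoss_smul hl ha hb)
  have hκ : ∀ a b, 0 ≤ a → 0 ≤ b → twoPointLoss F a b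
      = c * (tsallisFun α (a + b) - tsallisFun α a - tsallisFun α b) :=
    fun a b ha hb => (hk a b ha hb).symm.trans (hc a b ha hb)
  refine ⟨c, ?_, hκ⟩
  have h₁₁ := hF.lossToPoint_nonneg ((isMeas_const zero_le_one).dsum (isMeas_const zero_le_one))
  rw [← twoPointLoss, hκ 1 1 zero_le_one zero_le_one, tsallisFun_one, one_add_one_eq_two,
    sub_zero, sub_zero] at h₁₁
  exact nonneg_of_mul_nonneg_left h₁₁ tsallisFun_two_pos

end TwoPointLoss

/-- Characterization of Tsallis information loss on finite measure spaces
(Corollary 7), in both directions. -/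
theorem stmt16 (α : ℝ) (hα : 0 < α) :
    (∀ F : ∀ {X Y : Type} [Fintype X] [Fintype Y], (X → ℝ) → (Y → ℝ) → (X → Y) → ℝ,
      TsallisConds α F →
      ∃ c : ℝ, 0 ≤ c ∧ ∀ {X Y : Type} [Fintype X] [Fintype Y]
        (p : X → ℝ) (q : Y → ℝ) (f : X → Y),
        IsMeas p → IsMeas q → IsMP p q f →
        F p q f = c * (tsallisExt α p - tsallisExt α q)) ∧
    (∀ c : ℝ, 0 ≤ c →
      TsallisConds α (fun {X Y : Type} [Fintype X] [Fintype Y]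
        (p : X → ℝ) (q : Y → ℝ) (_ : X → Y) =>
        c * (tsallisExt α p - tsallisExt α q))) := by
  refine ⟨fun F hF => ?_, fun c hc => tsallisConds_tsallisExt hα hc⟩
  obtain ⟨c, hc, hκ⟩ := hF.exists_twoPointLoss_eq
  refine ⟨c, hc, fun p q f hp hq hf => ?_⟩
  rw [hF.apply_eq_lossToPoint_sub hp hq hf, hF.lossToPoint_eq_mul_tsallisExt hα.ne' hκ hp,
    hF.lossToPoint_eq_mul_tsallisExt hα.ne' hκ hq, mul_sub]
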